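/- For two distinct angles θ₁, θ₂ with θ₂ - θ₁ ∈ (-π, π), the imaginary part of the double integral ∫₀¹ dx ∫₀¹ dx' 1/(e^{iθ₁}x - e^{iθ₂}x')² (regularized by starting both integrals at 0⁺) equals (1/2)(π·sign(θ₂ - θ₁) - (θ₂ - θ₁)). Equivalently, Im(∫₀¹ (1/(x - e^{i(θ₂-θ₁)}) - 1/x) dx) = Arg(1 - e^{-i(θ₂-θ₁)}) = (1/2)(π·sign(θ₂-θ₁) - (θ₂-θ₁)), which lies in [-π/2, π/2]. -/

import Mathlib

open Real

/-! With `w = exp (iθ)`, the imaginary part of `1 / (x - w)` is the derivative of `arg (x - w)`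
(the segment `[0, 1]` stays off the branch cut because `Im w = sin θ ≠ 0`), while `1 / x` is
real. So the integral is `arg (1 - w) - arg (-w)`, where `arg (-w) = θ - π sign θ` and, like
`arg (1 - exp (-iθ))`, `arg (1 - w)` is read off from
`1 - exp (-iθ) = 2 sin (θ/2) · exp (i (π - θ) / 2)` (at `-θ`). The final bound holds because
`1 - exp (-iθ)` has nonnegative real part. -/

namespace Complex

lemma arg_real_mul_exp_mul_I {r : ℝ} (hr : 0 < r) {φ : ℝ} (hφ : φ ∈ Set.Ioc (-π) π) :
    arg (r * exp (φ * I)) = φ := by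
  rw [exp_mul_I, arg_mul_cos_add_sin_mul_I hr hφ]

lemma one_sub_exp_neg_mul_I (θ : ℝ) :
    1 - exp (-I * θ) = (2 * Real.sin (θ / 2) : ℝ) * exp ((π / 2 - θ / 2 : ℝ) * I) := by
  set u := exp (θ / 2 * I) with hu_def
  have hu : u ≠ 0 := exp_ne_zero _
  have e1 : exp (-I * θ) = u⁻¹ ^ 2 := by
    rw [← exp_neg, ← exp_nat_mul]; ring_nf
  have e2 : exp (-(θ / 2) * I) = u⁻¹ := by
    rw [← exp_neg]; ring_nf
  have e3 : exp ((π / 2 - θ / 2 : ℝ) * I) = I * u⁻¹ := by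
    push_cast
    rw [sub_mul, exp_sub, exp_pi_div_two_mul_I, div_eq_mul_inv]
  rw [e1, e3, ofReal_mul, ofReal_sin, Complex.sin]
  push_cast
  rw [e2, ← hu_def]
  field_simp
  linear_combination (u ^ 2 - 1) * I_sq

theorem arg_one_sub_exp_neg_mul_I {θ : ℝ} (h1 : -π < θ) (h2 : θ < π) (hθ : θ ≠ 0) :
    arg (1 - exp (-I * θ)) = 1 / 2 * (π * Real.sign θ - θ) := by
  rw [one_sub_exp_neg_mul_I]
  rcases hθ.lt_or_gt with hneg | hpos
  · have hsin : Real.sin (θ / 2) < 0 :=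
      Real.sin_neg_of_neg_of_neg_pi_lt (by linarith) (by linarith)
    have hflip : exp ((π / 2 - θ / 2 : ℝ) * I) = -exp ((-(π / 2) - θ / 2 : ℝ) * I) := by
      rw [← exp_add_pi_mul_I]; push_cast; ring_nf
    rw [hflip, mul_neg, ← neg_mul, ← ofReal_neg,
      arg_real_mul_exp_mul_I (by linarith) ⟨by linarith, by linarith⟩, Real.sign_of_neg hneg]
    ring
  · have hsin : 0 < Real.sin (θ / 2) := Real.sin_pos_of_pos_of_lt_pi (by linarith) (by linarith)
    rw [arg_real_mul_exp_mul_I (by linarith) ⟨by linarith, by linarith⟩, Real.sign_of_pos hpos]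
    ring

lemma arg_neg_exp_mul_I {θ : ℝ} (h1 : -π < θ) (h2 : θ < π) (hθ : θ ≠ 0) :
    arg (-exp (θ * I)) = θ - π * Real.sign θ := by
  have harg : arg (exp (θ * I)) = θ := by
    simpa using arg_real_mul_exp_mul_I one_pos ⟨h1, h2.le⟩
  rcases hθ.lt_or_gt with hneg | hpos
  · rw [arg_neg_eq_arg_add_pi_of_im_neg, harg, Real.sign_of_neg hneg]
    · ring
    · rw [exp_ofReal_mul_I_im]; exact Real.sin_neg_of_neg_of_neg_pi_lt hneg h1
  · rw [arg_neg_eq_arg_sub_pi_of_im_pos, harg, Real.sign_of_pos hpos]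
    · ring
    · rw [exp_ofReal_mul_I_im]; exact Real.sin_pos_of_pos_of_lt_pi hpos h2

theorem integral_im_one_div_sub {w : ℂ} (hw : w.im ≠ 0) (a b : ℝ) :
    ∫ x in a..b, (1 / ((x : ℂ) - w)).im = arg (b - w) - arg (a - w) := by
  have hslit (x : ℝ) : (x : ℂ) - w ∈ slitPlane := mem_slitPlane_iff.2 (Or.inr (by simpa using hw))
  have hderiv (x : ℝ) : HasDerivAt (fun t : ℝ ↦ arg ((t : ℂ) - w)) (1 / ((x : ℂ) - w)).im x := by
    have := ((hasDerivAt_id x).ofReal_comp.sub_const w).clog_real (hslit x)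
    simpa [Function.comp_def, log_im] using imCLM.hasFDerivAt.comp_hasDerivAt x this
  refine intervalIntegral.integral_eq_sub_of_hasDerivAt (fun x _ ↦ hderiv x)
    (Continuous.intervalIntegrable ?_ a b)
  exact continuous_im.comp (continuous_const.div (continuous_ofReal.sub continuous_const)
    fun x ↦ slitPlane_ne_zero (hslit x))

end Complex

theorem stmt0 (θ₁ θ₂ : ℝ) (h : θ₂ - θ₁ ∈ Set.Ioo (-π) π) (hne : θ₁ ≠ θ₂) :
    (∫ x in (0:ℝ)..1,
        (1 / ((x : ℂ) - Complex.exp (Complex.I * (θ₂ - θ₁))) - 1 / (x : ℂ)).im)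
      = Complex.arg (1 - Complex.exp (-Complex.I * (θ₂ - θ₁)))
    ∧ Complex.arg (1 - Complex.exp (-Complex.I * (θ₂ - θ₁)))
        = (1 / 2) * (π * Real.sign (θ₂ - θ₁) - (θ₂ - θ₁))
    ∧ (1 / 2) * (π * Real.sign (θ₂ - θ₁) - (θ₂ - θ₁)) ∈ Set.Icc (-(π / 2)) (π / 2) := by
  obtain ⟨h1, h2⟩ := h
  rw [← Complex.ofReal_sub]
  set θ := θ₂ - θ₁
  have hθ : θ ≠ 0 := sub_ne_zero.2 hne.symm
  have harg := Complex.arg_one_sub_exp_neg_mul_I h1 h2 hθ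
  have hw : (Complex.exp (Complex.I * θ)).im ≠ 0 := by
    rw [mul_comm, Complex.exp_ofReal_mul_I_im]
    exact fun h0 ↦ hθ ((Real.sin_eq_zero_iff_of_lt_of_lt h1 h2).1 h0)
  refine ⟨?_, harg, ?_⟩
  · have h_one := Complex.arg_one_sub_exp_neg_mul_I (θ := -θ) (by linarith) (by linarith)
      (neg_ne_zero.2 hθ)
    rw [Complex.ofReal_neg, neg_mul_neg, Real.sign_neg] at h_one
    calc (∫ x in (0:ℝ)..1,
          (1 / ((x : ℂ) - Complex.exp (Complex.I * θ)) - 1 / (x : ℂ)).im)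
        = ∫ x in (0:ℝ)..1, (1 / ((x : ℂ) - Complex.exp (Complex.I * θ))).im := by
          congr! 2 with x; simp
      _ = Complex.arg (1 - Complex.exp (Complex.I * θ))
            - Complex.arg (-Complex.exp (Complex.I * θ)) := by
          simpa using Complex.integral_im_one_div_sub hw 0 1
      _ = Complex.arg (1 - Complex.exp (-Complex.I * θ)) := by
          rw [h_one, mul_comm Complex.I, Complex.arg_neg_exp_mul_I h1 h2 hθ, harg]
          ring
  · rw [← harg, Set.mem_Icc, ← abs_le, Complex.abs_arg_le_pi_div_two_iff]
    simpa [Complex.exp_re] using Real.cos_le_one θ
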